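/- Let f : ℝⁿ × ℝᵐ → ℝⁿ, φ : ℝⁿ × ℝᵐ → ℝᵐ, and L : ℝⁿ × ℝᵐ → ℝ be continuously differentiable, and let u : ℝⁿ → ℝᵐ be continuously differentiable with φ(q, u(q)) = 0 for all q ∈ ℝⁿ and D_uφ(q, u(q)) invertible for all q ∈ ℝⁿ. Define f'(q) = f(q, u(q)) and L'(q) = L(q, u(q)). Suppose q₀, q₁, p₀, p₁, Qⁱ, Pⁱ ∈ ℝⁿ (i = 1,…,s) satisfy the symplectic partitioned Runge–Kutta equations for the augmented adjoint ODE system of f' and L': q₁ = q₀ + Δt·Σᵢ bᵢ f'(Qⁱ); Qⁱ = q₀ + Δt·Σⱼ aᵢⱼ f'(Qʲ); p₁ = p₀ − Δt·Σᵢ bᵢ ( Df'(Qⁱ)ᵀ Pⁱ + ∇L'(Qⁱ) ); Pⁱ = p₀ − Δt·Σⱼ ãᵢⱼ ( Df'(Qʲ)ᵀ Pʲ + ∇L'(Qʲ) ). Define Uⁱ := u(Qⁱ) and Λⁱ := −( D_uφ(Qⁱ,Uⁱ)ᵀ )⁻¹ ( D_uf(Qⁱ,Uⁱ)ᵀ Pⁱ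 + ∇_uL(Qⁱ,Uⁱ) ). Then (q₀, q₁, p₀, p₁, Qⁱ, Pⁱ, Uⁱ, Λⁱ) satisfies all six equations of the presymplectic Galerkin Hamiltonian variational integrator for the augmented adjoint DAE system: q₁ = q₀ + Δt·Σᵢ bᵢ f(Qⁱ,Uⁱ); Qⁱ = q₀ + Δt·Σⱼ aᵢⱼ f(Qʲ,Uʲ); p₁ = p₀ − Δt·Σᵢ bᵢ ( D_qf(Qⁱ,Uⁱ)ᵀ Pⁱ + D_qφ(Qⁱ,Uⁱ)ᵀ Λⁱ + ∇_qL(Qⁱ,Uⁱ) ); Pⁱ = p₀ − Δt·Σⱼ ãᵢⱼ ( D_qf(Qʲ,Uʲ)ᵀ Pʲ + D_qφ(Qʲ,Uʲ)ᵀ Λʲ + ∇_qL(Qʲ,Uʲ) ); 0 = φ(Qⁱ,Uⁱ); 0 = D_uf(Qⁱ,Uⁱ)ᵀ Pⁱ + D_uφ(Qⁱ,Uⁱ)ᵀ Λⁱ + ∇_uL(Qⁱ,Uⁱ). -/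

import Mathlib

open scoped RealInnerProductSpace

noncomputable section

abbrev Euc (n : ℕ) : Type := EuclideanSpace ℝ (Fin n)

/-- Partial Jacobian `D_qF(q,u)` with respect to the first argument. -/
noncomputable def Dq {n m k : ℕ} (F : Euc n × Euc m → Euc k) (q : Euc n) (u : Euc m) :
    Euc n →L[ℝ] Euc k :=
  fderiv ℝ (fun q' => F (q', u)) q

/-- Partial Jacobian `D_uF(q,u)` with respect to the second argument. -/
noncomputable def Du {n m k : ℕ} (F : Euc n × Euc m → Euc k) (q : Euc n) (u : Euc m) :
    Euc m →L[ℝ] Euc k :=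
  fderiv ℝ (fun u' => F (q, u')) u

/-- `D_qF(q,u)ᵀ`, the transpose (adjoint) of the partial Jacobian in `q`. -/
noncomputable def DqT {n m k : ℕ} (F : Euc n × Euc m → Euc k) (q : Euc n) (u : Euc m) :
    Euc k →L[ℝ] Euc n :=
  ContinuousLinearMap.adjoint (Dq F q u)

/-- `D_uF(q,u)ᵀ`, the transpose (adjoint) of the partial Jacobian in `u`. -/
noncomputable def DuT {n m k : ℕ} (F : Euc n × Euc m → Euc k) (q : Euc n) (u : Euc m) :
    Euc k →L[ℝ] Euc m :=
  ContinuousLinearMap.adjoint (Du F q u)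

/-- Partial gradient `∇_qL(q,u)`. -/
noncomputable def gradQ {n m : ℕ} (L : Euc n × Euc m → ℝ) (q : Euc n) (u : Euc m) : Euc n :=
  gradient (fun q' => L (q', u)) q

/-- Partial gradient `∇_uL(q,u)`. -/
noncomputable def gradU {n m : ℕ} (L : Euc n × Euc m → ℝ) (q : Euc n) (u : Euc m) : Euc m :=
  gradient (fun u' => L (q, u')) u

/-!
Along the graph of `u` the constraint `φ(q, u(q)) = 0` differentiates to
`D_qφ = -D_uφ ∘ Du`, so `D_qφᵀ Λ = -Duᵀ D_uφᵀ Λ`. The multiplier `Λ` is chosen so that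
`D_uφᵀ Λ = -(D_ufᵀ P + ∇_uL)`, hence `D_qφᵀ Λ = Duᵀ (D_ufᵀ P + ∇_uL)`, which is exactly the
term the chain rule adds to `D_qfᵀ P + ∇_qL` in the reduced force `Df'ᵀ P + ∇L'`. The stages of
the two integrators therefore carry the same forces, and the algebraic equations hold by
construction of `U` and `Λ`.
-/

section ChainRule

variable {E G H : Type*} [NormedAddCommGroup E] [NormedSpace ℝ E]
  [NormedAddCommGroup G] [NormedSpace ℝ G] [NormedAddCommGroup H] [NormedSpace ℝ H]
  {F : E × G → H} {g : E → G} {q : E} {u : G}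

theorem fderiv_partial_fst (hF : DifferentiableAt ℝ F (q, u)) :
    fderiv ℝ (fun x => F (x, u)) q = (fderiv ℝ F (q, u)).comp (ContinuousLinearMap.inl ℝ E G) :=
  (hF.hasFDerivAt.comp q (hasFDerivAt_prodMk_left q u)).fderiv

theorem fderiv_partial_snd (hF : DifferentiableAt ℝ F (q, u)) :
    fderiv ℝ (fun y => F (q, y)) u = (fderiv ℝ F (q, u)).comp (ContinuousLinearMap.inr ℝ E G) :=
  (hF.hasFDerivAt.comp u (hasFDerivAt_prodMk_right q u)).fderiv

theorem fderiv_comp_graph (hF : DifferentiableAt ℝ F (q, g q)) (hg : DifferentiableAt ℝ g q) :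
    fderiv ℝ (fun x => F (x, g x)) q
      = fderiv ℝ (fun x => F (x, g q)) q
        + (fderiv ℝ (fun y => F (q, y)) (g q)).comp (fderiv ℝ g q) := by
  have hgraph : HasFDerivAt (fun x => (x, g x))
      ((ContinuousLinearMap.id ℝ E).prod (fderiv ℝ g q)) q :=
    (hasFDerivAt_id q).prodMk hg.hasFDerivAt
  refine (hF.hasFDerivAt.comp q hgraph).fderiv.trans ?_
  rw [fderiv_partial_fst hF, fderiv_partial_snd hF]
  ext v
  simp only [ContinuousLinearMap.comp_apply, add_apply,
    ContinuousLinearMap.prod_apply, ContinuousLinearMap.id_apply,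
    ContinuousLinearMap.inl_apply, ContinuousLinearMap.inr_apply, ← map_add,
    Prod.mk_add_mk, add_zero, zero_add]

theorem fderiv_partial_fst_eq_of_graph_const {c : H} (hconst : ∀ x, F (x, g x) = c)
    (hF : DifferentiableAt ℝ F (q, g q)) (hg : DifferentiableAt ℝ g q) :
    fderiv ℝ (fun x => F (x, g q)) q
      = -((fderiv ℝ (fun y => F (q, y)) (g q)).comp (fderiv ℝ g q)) := by
  have hzero : fderiv ℝ (fun x => F (x, g x)) q = 0 := by
    simp only [hconst, fderiv_fun_const, Pi.zero_apply]
  rw [eq_neg_iff_add_eq_zero, ← fderiv_comp_graph hF hg, hzero]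

end ChainRule

theorem ContinuousLinearMap.isInvertible_adjoint_of_bijective {E : Type*}
    [NormedAddCommGroup E] [InnerProductSpace ℝ E] [FiniteDimensional ℝ E] {A : E →L[ℝ] E}
    (hA : Function.Bijective A) : (ContinuousLinearMap.adjoint A).IsInvertible := by
  have hinj : (ContinuousLinearMap.adjoint A).ker = ⊥ := by
    rw [← ContinuousLinearMap.orthogonal_range, LinearMap.range_eq_top_of_surjective _ hA.2,
      Submodule.top_orthogonal_eq_bot]
  have hsurj : Function.Surjective (ContinuousLinearMap.adjoint A) :=
    LinearMap.injective_iff_surjective.mp (LinearMap.ker_eq_bot.mp hinj)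
  exact ⟨.ofBijective _ hinj (LinearMap.range_eq_top_of_surjective _ hsurj), rfl⟩

section Reduction

variable {n m : ℕ}

def multiplier (f : Euc n × Euc m → Euc n) (φ : Euc n × Euc m → Euc m) (L : Euc n × Euc m → ℝ)
    (q : Euc n) (u : Euc m) (p : Euc n) : Euc m :=
  -(ContinuousLinearMap.inverse (DuT φ q u) (DuT f q u p + gradU L q u))

theorem DuT_multiplier (f : Euc n × Euc m → Euc n) {φ : Euc n × Euc m → Euc m}
    (L : Euc n × Euc m → ℝ) {q : Euc n} {u : Euc m} (hφ : Function.Bijective (Du φ q u))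
    (p : Euc n) :
    DuT φ q u (multiplier f φ L q u p) = -(DuT f q u p + gradU L q u) := by
  have hφT : (DuT φ q u).IsInvertible := ContinuousLinearMap.isInvertible_adjoint_of_bijective hφ
  rw [multiplier, map_neg, hφT.self_apply_inverse]

theorem stationarity_multiplier (f : Euc n × Euc m → Euc n) {φ : Euc n × Euc m → Euc m}
    (L : Euc n × Euc m → ℝ) {q : Euc n} {u : Euc m} (hφ : Function.Bijective (Du φ q u))
    (p : Euc n) :
    DuT f q u p + DuT φ q u (multiplier f φ L q u p) + gradU L q u = 0 := by
  rw [DuT_multiplier f L hφ]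
  abel

variable {k : ℕ} {ufun : Euc n → Euc m} {q : Euc n}

theorem adjoint_fderiv_comp_graph_apply {F : Euc n × Euc m → Euc k}
    (hF : DifferentiableAt ℝ F (q, ufun q)) (hu : DifferentiableAt ℝ ufun q) (p : Euc k) :
    ContinuousLinearMap.adjoint (fderiv ℝ (fun x => F (x, ufun x)) q) p
      = DqT F q (ufun q) p
        + ContinuousLinearMap.adjoint (fderiv ℝ ufun q) (DuT F q (ufun q) p) := by
  rw [fderiv_comp_graph hF hu, map_add, ContinuousLinearMap.adjoint_comp]
  rfl

theorem gradient_comp_graph {L : Euc n × Euc m → ℝ}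
    (hL : DifferentiableAt ℝ L (q, ufun q)) (hu : DifferentiableAt ℝ ufun q) :
    gradient (fun x => L (x, ufun x)) q
      = gradQ L q (ufun q)
        + ContinuousLinearMap.adjoint (fderiv ℝ ufun q) (gradU L q (ufun q)) := by
  refine ext_inner_right ℝ fun v => ?_
  rw [inner_gradient_left, fderiv_comp_graph hL hu, inner_add_left,
    ContinuousLinearMap.adjoint_inner_left, gradQ, gradU, inner_gradient_left,
    inner_gradient_left]
  rfl

theorem DqT_eq_of_graph_const {φ : Euc n × Euc m → Euc k} (hconstr : ∀ x, φ (x, ufun x) = 0)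
    (hφ : DifferentiableAt ℝ φ (q, ufun q)) (hu : DifferentiableAt ℝ ufun q) :
    DqT φ q (ufun q)
      = -(ContinuousLinearMap.adjoint (fderiv ℝ ufun q)).comp (DuT φ q (ufun q)) := by
  rw [DqT, Dq, fderiv_partial_fst_eq_of_graph_const hconstr hφ hu, map_neg,
    ContinuousLinearMap.adjoint_comp]
  rfl

theorem reduced_force_eq {f : Euc n × Euc m → Euc n} {φ : Euc n × Euc m → Euc m}
    {L : Euc n × Euc m → ℝ} (hf : DifferentiableAt ℝ f (q, ufun q))
    (hφ : DifferentiableAt ℝ φ (q, ufun q)) (hL : DifferentiableAt ℝ L (q, ufun q))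
    (hu : DifferentiableAt ℝ ufun q) (hconstr : ∀ x, φ (x, ufun x) = 0)
    (hinv : Function.Bijective (Du φ q (ufun q))) (p : Euc n) :
    ContinuousLinearMap.adjoint (fderiv ℝ (fun x => f (x, ufun x)) q) p
        + gradient (fun x => L (x, ufun x)) q
      = DqT f q (ufun q) p + DqT φ q (ufun q) (multiplier f φ L q (ufun q) p)
        + gradQ L q (ufun q) := by
  rw [adjoint_fderiv_comp_graph_apply hf hu, gradient_comp_graph hL hu,
    DqT_eq_of_graph_const hconstr hφ hu, neg_apply,
    ContinuousLinearMap.comp_apply, DuT_multiplier f L hinv, map_neg, neg_neg, map_add]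
  abel

end Reduction

theorem reduction_discretization_commute_general {n m s : ℕ}
    (f : Euc n × Euc m → Euc n) (φ : Euc n × Euc m → Euc m) (L : Euc n × Euc m → ℝ)
    (hf : ContDiff ℝ 1 f) (hφ : ContDiff ℝ 1 φ) (hL : ContDiff ℝ 1 L)
    (ufun : Euc n → Euc m) (hufun : ContDiff ℝ 1 ufun)
    (hconstr : ∀ x : Euc n, φ (x, ufun x) = 0)
    (hinv : ∀ x : Euc n, Function.Bijective (Du φ x (ufun x)))
    (Δt : ℝ)
    (a a' : Fin s → Fin s → ℝ) (b : Fin s → ℝ)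
    (q₀ q₁ p₀ p₁ : Euc n) (Q P : Fin s → Euc n)
    -- symplectic partitioned Runge--Kutta equations for the reduced system
    (hq1 : q₁ = q₀ + Δt • ∑ i, b i • f (Q i, ufun (Q i)))
    (hQ : ∀ i, Q i = q₀ + Δt • ∑ j, a i j • f (Q j, ufun (Q j)))
    (hp1 : p₁ = p₀ - Δt • ∑ i, b i •
      (ContinuousLinearMap.adjoint (fderiv ℝ (fun x => f (x, ufun x)) (Q i)) (P i)
        + gradient (fun x => L (x, ufun x)) (Q i)))
    (hP : ∀ i, P i = p₀ - Δt • ∑ j, a' i j •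
      (ContinuousLinearMap.adjoint (fderiv ℝ (fun x => f (x, ufun x)) (Q j)) (P j)
        + gradient (fun x => L (x, ufun x)) (Q j)))
    -- definitions of the algebraic internal stages
    (U : Fin s → Euc m) (hU : ∀ i, U i = ufun (Q i))
    (Λ : Fin s → Euc m)
    (hΛ : ∀ i, Λ i = -(ContinuousLinearMap.inverse (DuT φ (Q i) (U i))
      (DuT f (Q i) (U i) (P i) + gradU L (Q i) (U i)))) :
    -- the six equations of the presymplectic integrator for the augmented adjoint DAE
    q₁ = q₀ + Δt • ∑ i, b i • f (Q i, U i) ∧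
    (∀ i, Q i = q₀ + Δt • ∑ j, a i j • f (Q j, U j)) ∧
    p₁ = p₀ - Δt • ∑ i, b i •
      (DqT f (Q i) (U i) (P i) + DqT φ (Q i) (U i) (Λ i) + gradQ L (Q i) (U i)) ∧
    (∀ i, P i = p₀ - Δt • ∑ j, a' i j •
      (DqT f (Q j) (U j) (P j) + DqT φ (Q j) (U j) (Λ j) + gradQ L (Q j) (U j))) ∧
    (∀ i, φ (Q i, U i) = 0) ∧
    (∀ i, DuT f (Q i) (U i) (P i) + DuT φ (Q i) (U i) (Λ i)
      + gradU L (Q i) (U i) = 0) := by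
  obtain rfl : U = fun i => ufun (Q i) := funext hU
  obtain rfl : Λ = fun i => multiplier f φ L (Q i) (ufun (Q i)) (P i) := funext hΛ
  have hforce := fun x => reduced_force_eq (f := f) (L := L)
    (hf.differentiable one_ne_zero _) (hφ.differentiable one_ne_zero _)
    (hL.differentiable one_ne_zero _) (hufun.differentiable one_ne_zero x) hconstr (hinv x)
  simp only [hforce] at hp1 hP
  exact ⟨hq1, hQ, hp1, hP, fun i => hconstr (Q i),
    fun i => stationarity_multiplier f L (hinv (Q i)) (P i)⟩

/-- commutativity of reduction and discretization (bottom face of the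
naturality diagram). A symplectic partitioned Runge–Kutta solution of the reduced
augmented adjoint ODE system for `f'(q) = f(q,u(q))`, `L'(q) = L(q,u(q))`, together with
`Uⁱ = u(Qⁱ)` and `Λⁱ = −(D_uφ(Qⁱ,Uⁱ)ᵀ)⁻¹ (D_uf(Qⁱ,Uⁱ)ᵀ Pⁱ + ∇_uL(Qⁱ,Uⁱ))`, satisfies all
six equations of the presymplectic integrator for the augmented adjoint DAE system. -/
theorem reduction_discretization_commute {n m s : ℕ} (hs : 1 ≤ s)
    (f : Euc n × Euc m → Euc n) (φ : Euc n × Euc m → Euc m) (L : Euc n × Euc m → ℝ)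
    (hf : ContDiff ℝ 1 f) (hφ : ContDiff ℝ 1 φ) (hL : ContDiff ℝ 1 L)
    (ufun : Euc n → Euc m) (hufun : ContDiff ℝ 1 ufun)
    (hconstr : ∀ x : Euc n, φ (x, ufun x) = 0)
    (hinv : ∀ x : Euc n, Function.Bijective (Du φ x (ufun x)))
    (Δt : ℝ) (hΔt : 0 < Δt)
    (a a' : Fin s → Fin s → ℝ) (b : Fin s → ℝ)
    (hsym : ∀ i j, b i * a' i j + b j * a j i = b i * b j)
    (q₀ q₁ p₀ p₁ : Euc n) (Q P : Fin s → Euc n)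
    -- symplectic partitioned Runge--Kutta equations for the reduced system
    (hq1 : q₁ = q₀ + Δt • ∑ i, b i • f (Q i, ufun (Q i)))
    (hQ : ∀ i, Q i = q₀ + Δt • ∑ j, a i j • f (Q j, ufun (Q j)))
    (hp1 : p₁ = p₀ - Δt • ∑ i, b i •
      (ContinuousLinearMap.adjoint (fderiv ℝ (fun x => f (x, ufun x)) (Q i)) (P i)
        + gradient (fun x => L (x, ufun x)) (Q i)))
    (hP : ∀ i, P i = p₀ - Δt • ∑ j, a' i j •
      (ContinuousLinearMap.adjoint (fderiv ℝ (fun x => f (x, ufun x)) (Q j)) (P j)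
        + gradient (fun x => L (x, ufun x)) (Q j)))
    -- definitions of the algebraic internal stages
    (U : Fin s → Euc m) (hU : ∀ i, U i = ufun (Q i))
    (Λ : Fin s → Euc m)
    (hΛ : ∀ i, Λ i = -(ContinuousLinearMap.inverse (DuT φ (Q i) (U i))
      (DuT f (Q i) (U i) (P i) + gradU L (Q i) (U i)))) :
    -- the six equations of the presymplectic integrator for the augmented adjoint DAE
    q₁ = q₀ + Δt • ∑ i, b i • f (Q i, U i) ∧
    (∀ i, Q i = q₀ + Δt • ∑ j, a i j • f (Q j, U j)) ∧
    p₁ = p₀ - Δt • ∑ i, b i •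
      (DqT f (Q i) (U i) (P i) + DqT φ (Q i) (U i) (Λ i) + gradQ L (Q i) (U i)) ∧
    (∀ i, P i = p₀ - Δt • ∑ j, a' i j •
      (DqT f (Q j) (U j) (P j) + DqT φ (Q j) (U j) (Λ j) + gradQ L (Q j) (U j))) ∧
    (∀ i, φ (Q i, U i) = 0) ∧
    (∀ i, DuT f (Q i) (U i) (P i) + DuT φ (Q i) (U i) (Λ i)
      + gradU L (Q i) (U i) = 0) :=
  reduction_discretization_commute_general f φ L hf hφ hL ufun hufun hconstr hinv Δt a a' b q₀ q₁ p₀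
    p₁ Q P hq1 hQ hp1 hP U hU Λ hΛ

end
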